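/- For D = {R(a,b), R(a,c), B(b)} and q = ∃x,y,z. R(x,y) ∧ R(x,z) ∧ ¬A(y) ∧ ¬B(z): the set {+R(a,b), +R(a,c), −A(b), −B(c)} is a minimal signed support (so +R(a,b) is signed-relevant), while the only minimal positive support of q in D is {R(a,c)} (so R(a,b) is not positive-relevant). Hence signed-relevance of a positive fact does not imply positive-relevance. -/
import Mathlib


/-- The constants of the database. -/
inductive Const | a | b | c
deriving DecidableEq

open Const

/-- Facts: `R x y`, `A x`, `B x`. -/
abbrev DBFact := (Const × Const) ⊕ Const ⊕ Const

def R (x y : Const) : DBFact := Sum.inl (x, y)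
def A (x : Const) : DBFact := Sum.inr (Sum.inl x)
def B (x : Const) : DBFact := Sum.inr (Sum.inr x)

/-- The database D = {R(a,b), R(a,c), B(b)} (the relation A is empty). -/
def D : Set DBFact := {R a b, R a c, B b}

/-- Signed supports of q = ∃x,y,z. R(x,y) ∧ R(x,z) ∧ ¬A(y) ∧ ¬B(z) in `D`. -/
def SignedSupport (T : Set (Bool × DBFact)) : Prop :=
  (∀ F : DBFact, (true, F) ∈ T → F ∈ D) ∧
  (∀ F : DBFact, (false, F) ∈ T → F ∉ D) ∧
  (∃ x y z : Const, (true, R x y) ∈ T ∧ (true, R x z) ∈ T ∧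
    (false, A y) ∈ T ∧ (false, B z) ∈ T)

def MinSignedSupport (T : Set (Bool × DBFact)) : Prop :=
  SignedSupport T ∧ ∀ T' : Set (Bool × DBFact), T' ⊂ T → ¬ SignedSupport T'

/-- Positive supports of q in D: negated atoms are checked against the full
database `D`. -/
def PosSupport (S : Set DBFact) : Prop :=
  S ⊆ D ∧ ∃ x y z : Const, R x y ∈ S ∧ R x z ∈ S ∧ A y ∉ D ∧ B z ∉ D

def MinPosSupport (S : Set DBFact) : Prop :=
  PosSupport S ∧ ∀ S' : Set DBFact, S' ⊂ S → ¬ PosSupport S'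

lemma aux_const_cases (x : Const) : x = Const.a ∨ x = Const.b ∨ x = Const.c := by
  cases x <;> simp

/-- {+R(a,b), +R(a,c), −A(b), −B(c)} is a minimal signed support (so R(a,b) is
signed-relevant), while the only minimal positive support is {R(a,c)} (so
R(a,b) is not positive-relevant). -/
theorem signed_relevance_does_not_imply_positive_relevance :
    MinSignedSupport {(true, R a b), (true, R a c), (false, A b), (false, B c)} ∧
    MinPosSupport {R a c} ∧
    (∀ S : Set DBFact, MinPosSupport S → S = {R a c}) := by
  have hAB : ∀ y : Const, A y ∉ D := by
    intro y; simp [A, B, R, D, Set.mem_insert_iff]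
  have hBc : B c ∉ D := by simp [A, B, R, D, Set.mem_insert_iff]
  refine ⟨⟨⟨?_, ?_, a, b, c, ?_, ?_, ?_, ?_⟩, ?_⟩, ⟨⟨?_, a, c, c, ?_, ?_, hAB c, hBc⟩, ?_⟩, ?_⟩
  · intro F hF
    simp only [Set.mem_insert_iff, Set.mem_singleton_iff, Prod.mk.injEq] at hF
    rcases hF with ⟨_, h⟩ | ⟨_, h⟩ | ⟨h, _⟩ | ⟨h, _⟩ <;> simp_all [D, Set.mem_insert_iff]
  · intro F hF
    simp only [Set.mem_insert_iff, Set.mem_singleton_iff, Prod.mk.injEq] at hF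
    rcases hF with ⟨h, _⟩ | ⟨h, _⟩ | ⟨_, h⟩ | ⟨_, h⟩ <;>
      simp_all [D, A, B, R, Set.mem_insert_iff]
  · simp
  · simp
  · simp
  · simp
  · -- signed minimality
    rintro T' ⟨hsub, hne⟩ ⟨_, _, x, y, z, h1, h2, h3, h4⟩
    apply hne
    have hy : y = b := by
      have := hsub h3
      simp only [Set.mem_insert_iff, Set.mem_singleton_iff, Prod.mk.injEq] at this
      rcases this with ⟨h, _⟩ | ⟨h, _⟩ | ⟨_, h⟩ | ⟨_, h⟩ <;> simp_all [A, B, R]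
    have hz : z = c := by
      have := hsub h4
      simp only [Set.mem_insert_iff, Set.mem_singleton_iff, Prod.mk.injEq] at this
      rcases this with ⟨h, _⟩ | ⟨h, _⟩ | ⟨_, h⟩ | ⟨_, h⟩ <;> simp_all [A, B, R]
    subst hy hz
    have hx : x = a := by
      have := hsub h1
      simp only [Set.mem_insert_iff, Set.mem_singleton_iff, Prod.mk.injEq] at this
      rcases this with ⟨_, h⟩ | ⟨_, h⟩ | ⟨h, _⟩ | ⟨h, _⟩ <;> simp_all [A, B, R]
    subst hx
    intro p hp
    simp only [Set.mem_insert_iff, Set.mem_singleton_iff] at hp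
    rcases hp with h | h | h | h <;> subst h <;> assumption
  · intro F hF; simp only [Set.mem_singleton_iff] at hF; subst hF
    simp [D, Set.mem_insert_iff]
  · simp
  · simp
  · -- pos minimality of {R a c}
    rintro S' ⟨hsub, hne⟩ ⟨hS'D, x, y, z, h1, _⟩
    apply hne
    have h1' := hsub h1
    simp only [Set.mem_singleton_iff] at h1'
    intro p hp
    simp only [Set.mem_singleton_iff] at hp
    subst hp; rwa [← h1']
  · -- uniqueness
    rintro S ⟨⟨hSD, x, y, z, h1, h2, _, h4⟩, hmin⟩
    have hz : z = c := by
      have := hSD h2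
      simp only [D, Set.mem_insert_iff, Set.mem_singleton_iff] at this
      rcases this with h | h | h <;> simp_all [A, B, R, D, Set.mem_insert_iff]
    have hx : x = a := by
      have := hSD h2
      simp only [D, Set.mem_insert_iff, Set.mem_singleton_iff] at this
      rcases this with h | h | h <;> simp_all [A, B, R]
    subst hz hx
    have hmem : {R a c} ⊆ S := by
      intro p hp; simp only [Set.mem_singleton_iff] at hp; subst hp; exact h2
    by_contra hne
    exact hmin {R a c} ⟨hmem, fun h => hne ((Set.Subset.antisymm (h) hmem).symm ▸ rfl)⟩
      ⟨by intro p hp; simp only [Set.mem_singleton_iff] at hp; subst hp;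
          simp [D, Set.mem_insert_iff],
       a, c, c, rfl, rfl, hAB c, hBc⟩
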